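/- Let B be a bimonoid in a braided monoidal category C whose shear morphism sh_B is an isomorphism, with inverse σ : B ⊗ B → B ⊗ B. Then the morphism S := λ_B ∘ (ε ⊗ id_B) ∘ σ ∘ (id_B ⊗ η) ∘ ρ_B⁻¹ : B → B is an antipode for B, so B is a Hopf monoid in C. -/

import Mathlib

/-!
The shear map `sh (a ⊗ b) = a₁ ⊗ a₂ b` is a morphism of right `B`-modules (`B` multiplying the
right factor) and of left `B`-comodules (`B` coacting on the left factor), hence so is its inverse
`σ`. Comodule linearity and counitality give `σ (a ⊗ b) = a₁ ⊗ g (a₂ ⊗ b)` with `g = (ε ⊗ id) σ`,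
and module linearity gives `g (a ⊗ b) = g (a ⊗ 1) b = S a · b`. Therefore
`S a₁ · a₂ = g (Δ a) = g (sh (a ⊗ 1)) = ε a · 1`, and, since `m = (ε ⊗ id) sh` and
`σ (a ⊗ 1) = a₁ ⊗ S a₂`, also `a₁ · S a₂ = m (σ (a ⊗ 1)) = (ε ⊗ id) (a ⊗ 1) = ε a · 1`.
-/

open CategoryTheory MonoidalCategory

universe v u

variable {C : Type u} [Category.{v} C] [MonoidalCategory C] [BraidedCategory C]

/-- The shear morphism `(id_B ⊗ m) ∘ α ∘ (Δ ⊗ id_B) : B ⊗ B ⟶ B ⊗ B` of a bimonoid `B`. -/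
noncomputable def Bimon_.shear (B : Bimon C) : B.X.X ⊗ B.X.X ⟶ B.X.X ⊗ B.X.X :=
  ((ComonObj.comul (self := Comon.comon B)).hom ▷ B.X.X) ≫ (α_ B.X.X B.X.X B.X.X).hom ≫ (B.X.X ◁ MonObj.mul (X := B.X.X))

/-- The morphism `S := λ_B ∘ (ε ⊗ id_B) ∘ σ ∘ (id_B ⊗ η) ∘ ρ_B⁻¹ : B ⟶ B` built from an
inverse `σ` of the shear morphism of a bimonoid `B`. -/
noncomputable def Bimon_.antipodeOfShearInv (B : Bimon C)
    (σ : B.X.X ⊗ B.X.X ⟶ B.X.X ⊗ B.X.X) : B.X.X ⟶ B.X.X :=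
  (ρ_ B.X.X).inv ≫ (B.X.X ◁ MonObj.one (X := B.X.X)) ≫ σ ≫ ((ComonObj.counit (self := Comon.comon B)).hom ▷ B.X.X) ≫ (λ_ B.X.X).hom

open scoped MonObj ComonObj

section

variable {D : Type*} [Category D] [MonoidalCategory D]

theorem rightUnitor_inv_whiskerLeft_whiskerRight_leftUnitor {X Y : D} (f : X ⟶ 𝟙_ D)
    (g : 𝟙_ D ⟶ Y) : (ρ_ X).inv ≫ (X ◁ g) ≫ (f ▷ Y) ≫ (λ_ Y).hom = f ≫ g := by
  rw [whisker_exchange_assoc, leftUnitor_naturality, ← rightUnitor_inv_naturality_assoc,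
    unitors_equal]
  simp

theorem rightUnitor_inv_whiskerLeft_whiskerRight_associator {X Y Z W : D} (f : X ⟶ Y ⊗ Z)
    (g : 𝟙_ D ⟶ W) :
    (ρ_ X).inv ≫ (X ◁ g) ≫ (f ▷ W) ≫ (α_ Y Z W).hom = f ≫ (Y ◁ ((ρ_ Z).inv ≫ (Z ◁ g))) := by
  rw [whisker_exchange_assoc, ← rightUnitor_inv_naturality_assoc, associator_naturality_right]
  simp

theorem associator_whiskerLeft_mul_whiskerRight_leftUnitor {X M : D} [MonObj M]
    (f : X ⟶ 𝟙_ D) :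
    (α_ X M M).hom ≫ (X ◁ μ[M]) ≫ (f ▷ M) ≫ (λ_ M).hom
      = (((f ▷ M) ≫ (λ_ M).hom) ▷ M) ≫ μ[M] := by
  rw [whisker_exchange_assoc, leftUnitor_naturality, ← associator_naturality_left_assoc]
  simp

theorem whiskerRight_one_associator_whiskerLeft_mul (X M : D) [MonObj M] :
    (((ρ_ X).inv ≫ (X ◁ η[M])) ▷ M) ≫ (α_ X M M).hom ≫ (X ◁ μ[M]) = 𝟙 _ := by
  rw [comp_whiskerRight_assoc, associator_naturality_middle_assoc, ← whiskerLeft_comp,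
    MonObj.one_mul, triangle_assoc_comp_right_inv_assoc]
  simp

theorem comul_whiskerRight_associator_counit (X Y : D) [ComonObj X] :
    (Δ[X] ▷ Y) ≫ (α_ X X Y).hom ≫ (X ◁ ((ε[X] ▷ Y) ≫ (λ_ Y).hom)) = 𝟙 _ := by
  rw [whiskerLeft_comp, ← associator_naturality_middle_assoc, triangle, ← comp_whiskerRight,
    ← comp_whiskerRight]
  simp

end

namespace Bimon_

variable (B : Bimon C)

theorem shear_def :
    shear B = (Δ[B.X.X] ▷ B.X.X) ≫ (α_ B.X.X B.X.X B.X.X).hom ≫ (B.X.X ◁ μ[B.X.X]) :=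
  rfl

theorem antipodeOfShearInv_def (σ : B.X.X ⊗ B.X.X ⟶ B.X.X ⊗ B.X.X) :
    antipodeOfShearInv B σ
      = (ρ_ B.X.X).inv ≫ (B.X.X ◁ η[B.X.X]) ≫ σ ≫ (ε[B.X.X] ▷ B.X.X) ≫ (λ_ B.X.X).hom :=
  rfl

theorem shear_whiskerRight_comm_mul :
    (shear B ▷ B.X.X) ≫ (α_ B.X.X B.X.X B.X.X).hom ≫ (B.X.X ◁ μ[B.X.X])
      = ((α_ B.X.X B.X.X B.X.X).hom ≫ (B.X.X ◁ μ[B.X.X])) ≫ shear B := by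
  rw [shear_def]
  simp only [comp_whiskerRight, Category.assoc]
  slice_lhs 3 4 => rw [associator_naturality_middle]
  slice_lhs 4 5 => rw [← whiskerLeft_comp, MonObj.mul_assoc, whiskerLeft_comp, whiskerLeft_comp]
  slice_lhs 2 4 => rw [pentagon]
  slice_rhs 2 3 => rw [whisker_exchange]
  slice_rhs 3 4 => rw [associator_naturality_right]
  slice_rhs 1 2 => rw [← associator_naturality_left]
  simp

theorem shear_comm_comul_whiskerRight :
    shear B ≫ (Δ[B.X.X] ▷ B.X.X) ≫ (α_ B.X.X B.X.X B.X.X).hom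
      = ((Δ[B.X.X] ▷ B.X.X) ≫ (α_ B.X.X B.X.X B.X.X).hom) ≫ (B.X.X ◁ shear B) := by
  rw [shear_def]
  simp only [whiskerLeft_comp, Category.assoc]
  slice_rhs 2 3 => rw [← associator_naturality_middle]
  slice_rhs 1 2 => rw [← comp_whiskerRight, ComonObj.comul_assoc, comp_whiskerRight,
    comp_whiskerRight]
  slice_rhs 3 5 => rw [pentagon]
  slice_lhs 3 4 => rw [whisker_exchange]
  slice_lhs 4 5 => rw [associator_naturality_right]
  slice_lhs 2 3 => rw [← associator_naturality_left]
  simp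

theorem shear_counit : shear B ≫ (ε[B.X.X] ▷ B.X.X) ≫ (λ_ B.X.X).hom = μ[B.X.X] := by
  rw [shear_def, Category.assoc, Category.assoc,
    associator_whiskerLeft_mul_whiskerRight_leftUnitor, ← comp_whiskerRight_assoc]
  simp

theorem unit_shear : (ρ_ B.X.X).inv ≫ (B.X.X ◁ η[B.X.X]) ≫ shear B = Δ[B.X.X] := by
  rw [shear_def, reassoc_of% rightUnitor_inv_whiskerLeft_whiskerRight_associator,
    ← whiskerLeft_comp, Category.assoc, MonObj.mul_one]
  simp

section

variable [IsIso (shear B)]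

theorem inv_shear_whiskerRight_comm_mul :
    (inv (shear B) ▷ B.X.X) ≫ (α_ B.X.X B.X.X B.X.X).hom ≫ (B.X.X ◁ μ[B.X.X])
      = ((α_ B.X.X B.X.X B.X.X).hom ≫ (B.X.X ◁ μ[B.X.X])) ≫ inv (shear B) :=
  (CommSq.horiz_inv (f := whiskerRightIso (asIso (shear B)) B.X.X) (i := asIso (shear B))
    ⟨shear_whiskerRight_comm_mul B⟩).w

theorem inv_shear_comm_comul_whiskerRight :
    inv (shear B) ≫ (Δ[B.X.X] ▷ B.X.X) ≫ (α_ B.X.X B.X.X B.X.X).hom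
      = ((Δ[B.X.X] ▷ B.X.X) ≫ (α_ B.X.X B.X.X B.X.X).hom) ≫ (B.X.X ◁ inv (shear B)) :=
  (CommSq.horiz_inv (f := asIso (shear B)) (i := whiskerLeftIso B.X.X (asIso (shear B)))
    ⟨shear_comm_comul_whiskerRight B⟩).w

theorem comul_inv_shear : Δ[B.X.X] ≫ inv (shear B) = (ρ_ B.X.X).inv ≫ (B.X.X ◁ η[B.X.X]) := by
  rw [← unit_shear, Category.assoc, Category.assoc, IsIso.hom_inv_id, Category.comp_id]

theorem inv_shear_mul : inv (shear B) ≫ μ[B.X.X] = (ε[B.X.X] ▷ B.X.X) ≫ (λ_ B.X.X).hom := by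
  rw [← shear_counit, IsIso.inv_hom_id_assoc]

theorem inv_shear_eq :
    inv (shear B) = (Δ[B.X.X] ▷ B.X.X) ≫ (α_ B.X.X B.X.X B.X.X).hom
      ≫ (B.X.X ◁ (inv (shear B) ≫ (ε[B.X.X] ▷ B.X.X) ≫ (λ_ B.X.X).hom)) := by
  conv_lhs => rw [← Category.comp_id (inv (shear B)),
    ← comul_whiskerRight_associator_counit, reassoc_of% inv_shear_comm_comul_whiskerRight]
  simp [whiskerLeft_comp]

theorem unit_inv_shear :
    (ρ_ B.X.X).inv ≫ (B.X.X ◁ η[B.X.X]) ≫ inv (shear B)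
      = Δ[B.X.X] ≫ (B.X.X ◁ antipodeOfShearInv B (inv (shear B))) := by
  conv_lhs => rw [inv_shear_eq]
  rw [reassoc_of% rightUnitor_inv_whiskerLeft_whiskerRight_associator, ← whiskerLeft_comp,
    antipodeOfShearInv_def]
  simp

theorem antipodeOfShearInv_whiskerRight_mul :
    (antipodeOfShearInv B (inv (shear B)) ▷ B.X.X) ≫ μ[B.X.X]
      = inv (shear B) ≫ (ε[B.X.X] ▷ B.X.X) ≫ (λ_ B.X.X).hom := by
  have counit_inv_shear_comm_mul :
      ((inv (shear B) ≫ (ε[B.X.X] ▷ B.X.X) ≫ (λ_ B.X.X).hom) ▷ B.X.X) ≫ μ[B.X.X]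
        = (α_ B.X.X B.X.X B.X.X).hom ≫ (B.X.X ◁ μ[B.X.X])
          ≫ inv (shear B) ≫ (ε[B.X.X] ▷ B.X.X) ≫ (λ_ B.X.X).hom := by
    rw [comp_whiskerRight_assoc, ← associator_whiskerLeft_mul_whiskerRight_leftUnitor,
      reassoc_of% inv_shear_whiskerRight_comm_mul]
  rw [antipodeOfShearInv_def, ← Category.assoc, comp_whiskerRight_assoc, counit_inv_shear_comm_mul,
    reassoc_of% whiskerRight_one_associator_whiskerLeft_mul]

theorem antipodeOfShearInv_left :
    Δ[B.X.X] ≫ (antipodeOfShearInv B (inv (shear B)) ▷ B.X.X) ≫ μ[B.X.X]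
      = ε[B.X.X] ≫ η[B.X.X] := by
  rw [antipodeOfShearInv_whiskerRight_mul, reassoc_of% comul_inv_shear,
    rightUnitor_inv_whiskerLeft_whiskerRight_leftUnitor]

theorem antipodeOfShearInv_right :
    Δ[B.X.X] ≫ (B.X.X ◁ antipodeOfShearInv B (inv (shear B))) ≫ μ[B.X.X]
      = ε[B.X.X] ≫ η[B.X.X] := by
  rw [← reassoc_of% unit_inv_shear, inv_shear_mul,
    rightUnitor_inv_whiskerLeft_whiskerRight_leftUnitor]

end

end Bimon_

/-- If the shear morphism of a bimonoid `B` in a braided monoidal category is an isomorphism,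
with inverse `σ`, then `S := λ_B ∘ (ε ⊗ id_B) ∘ σ ∘ (id_B ⊗ η) ∘ ρ_B⁻¹` is an antipode for `B`,
so that `B` is (underlies) a Hopf monoid in `C`. -/
theorem Bimon_.antipodeOfShearInv_is_antipode (B : Bimon C)
    (σ : B.X.X ⊗ B.X.X ⟶ B.X.X ⊗ B.X.X)
    (hσ₁ : Bimon_.shear B ≫ σ = 𝟙 (B.X.X ⊗ B.X.X)) (hσ₂ : σ ≫ Bimon_.shear B = 𝟙 (B.X.X ⊗ B.X.X)) :
    ((ComonObj.comul (self := Comon.comon B)).hom ≫ (Bimon_.antipodeOfShearInv B σ ▷ B.X.X) ≫ MonObj.mul (X := B.X.X) = (ComonObj.counit (self := Comon.comon B)).hom ≫ MonObj.one (X := B.X.X) ∧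
      (ComonObj.comul (self := Comon.comon B)).hom ≫ (B.X.X ◁ Bimon_.antipodeOfShearInv B σ) ≫ MonObj.mul (X := B.X.X) = (ComonObj.counit (self := Comon.comon B)).hom ≫ MonObj.one (X := B.X.X)) ∧
    ∃ H : Hopf C, H.toBimon = B := by
  have : IsIso (shear B) := ⟨⟨σ, hσ₁, hσ₂⟩⟩
  obtain rfl : σ = inv (shear B) := (IsIso.inv_eq_of_hom_inv_id hσ₁).symm
  have left := antipodeOfShearInv_left B
  have right := antipodeOfShearInv_right B
  exact ⟨⟨left, right⟩,
    { X := B.X.X, hopf := { antipode := _, antipode_left := left, antipode_right := right } }, rfl⟩
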